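/- Let c be the two-phase speed function with c₁ ≥ c₂ > 0 and ρ* = 1/2 − (1/2)√(1 − c₂/c₁). Let the initial profile be constant, ρ₀ ≡ ρ with 0 < ρ < ρ*, and let v be given by the variational formula. Set r* = 1/2 − (1/2)√(1 − 4ρ(1−ρ)c₁/c₂). Then for every t > 0 and every x ∈ ℝ \ {0, c₂(1−2r*)t, c₂(1−2ρ)t}, the partial derivative ∂v/∂x(x,t) exists and equals: ρ if x < 0; r* if 0 < x < c₂(1−2r*)t; (1/2)(1 − x/(tc₂)) if c₂(1−2r*)t < x < c₂(1−2ρ)t; and ρ if x > c₂(1−2ρ)t. -/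

import Mathlib

open MeasureTheory ProbabilityTheory Real Set Filter Topology

noncomputable section


/-! ### The Hopf–Lax type variational formula for TASEP with discontinuous rates -/

/-- The wedge shape function `g`: `g(y) = -y` for `y ≤ -1`, `(1-y)²/4` for `-1 ≤ y ≤ 1`,
`0` for `y ≥ 1`. -/
def gfun (y : ℝ) : ℝ := if y ≤ -1 then -y else if y ≤ 1 then (1 - y) ^ 2 / 4 else 0

/-- A continuous, piecewise `C¹` path `w : [0,t] → ℝ` with `w(t) = x`. -/
def IsVPath (t x : ℝ) (w : ℝ → ℝ) : Prop :=
  ContinuousOn w (Icc 0 t) ∧ w t = x ∧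
    ∃ (k : ℕ) (s : Fin (k + 1) → ℝ), StrictMono s ∧ s 0 = 0 ∧ s (Fin.last k) = t ∧
      ∀ i : Fin k, ContDiffOn ℝ 1 w (Icc (s i.castSucc) (s i.succ))

/-- `w` is affine on `[a,b]`. -/
def AffineOnR (w : ℝ → ℝ) (a b : ℝ) : Prop :=
  ∀ u ∈ Icc a b, w u = w a + ((u - a) / (b - a)) * (w b - w a)

/-- A continuous, piecewise linear path `w : [0,t] → ℝ` with `w(t) = x`. -/
def IsPLPath (t x : ℝ) (w : ℝ → ℝ) : Prop :=
  ContinuousOn w (Icc 0 t) ∧ w t = x ∧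
    ∃ (k : ℕ) (s : Fin (k + 1) → ℝ), StrictMono s ∧ s 0 = 0 ∧ s (Fin.last k) = t ∧
      ∀ i : Fin k, AffineOnR w (s i.castSucc) (s i.succ)

/-- `v₀` is an antiderivative of the initial profile `ρ₀`, normalized by `v₀(0) = 0`. -/
def IsV0For (ρ₀ v₀ : ℝ → ℝ) : Prop :=
  v₀ 0 = 0 ∧ ∀ a b : ℝ, v₀ b - v₀ a = ∫ x in a..b, ρ₀ x

/-- The variational formula:
`v(x,t) = sup over paths w with w(t) = x of { v₀(w(0)) - ∫₀ᵗ c(w(s)) g(w'(s)/c(w(s))) ds }`,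
with `v(x,0) = v₀(x)`. -/
def vFun (c v₀ : ℝ → ℝ) (x t : ℝ) : ℝ :=
  if t ≤ 0 then v₀ x
  else sSup { A | ∃ w : ℝ → ℝ, IsVPath t x w ∧
    A = v₀ (w 0) - ∫ s in (0:ℝ)..t, c (w s) * gfun (deriv w s / c (w s)) }

/-- The two-phase speed function: `c₁` to the left of the origin, `c₂` to its right. -/
def twoPhase (c₁ c₂ : ℝ) : ℝ → ℝ := fun u => if u < 0 then c₁ else c₂

/-- The conjugate `(a·h)*(y) = inf_{ρ ∈ ℝ} ( yρ - a ρ(1-ρ) )` of the unrestricted flux. -/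
def hstar (a y : ℝ) : ℝ := sInf { v | ∃ ρ : ℝ, v = y * ρ - a * (ρ * (1 - ρ)) }

/-- The Hopf–Lax formula over piecewise linear paths with the conjugate `(c·h)*`. -/
def VFunPL (c v₀ : ℝ → ℝ) (x t : ℝ) : ℝ :=
  sSup { A | ∃ w : ℝ → ℝ, IsPLPath t x w ∧
    A = v₀ (w 0) + ∫ s in (0:ℝ)..t, hstar (c (w s)) (deriv w s) }

/-!
Upper bound by calibration. For `ρ ≤ r ≤ 1` with `c₂ r (1 - r) ≤ c₁ ρ (1 - ρ)`, let
`Λ u = max (ρ u) (r u)`. Since `c g(d/c) ≥ c m (1 - m) - m d` for every `m ∈ [0, 1]`, taking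
`m = ρ` in the left phase and `m = r` in the right one shows that along any path the Lagrangian is
at least `c₂ r (1 - r)` minus the right derivative of `Λ ∘ w`. Integrating, every path value is at
most `Λ x - c₂ r (1 - r) t`.

Lower bound by explicit paths. In each region a straight path, or one broken at the interface, has
velocity `c (1 - 2 m)` and hence cost `c m²` per unit time in each phase, and attains the bound for
`r = r*`, `r*`, `(1 - x / (c₂ t)) / 2`, `ρ` respectively; `r*` is the density carrying the flux
`c₂ r* (1 - r*) = c₁ ρ (1 - ρ)` of the left phase. So `v(·, t)` is explicit on each region and can
be differentiated there.
-/
open scoped NNReal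

lemma gfun_nonneg (y : ℝ) : 0 ≤ gfun y := by
  unfold gfun; split_ifs <;> nlinarith

lemma gfun_le_abs_add_one (y : ℝ) : gfun y ≤ |y| + 1 := by
  unfold gfun; split_ifs
  · linarith [neg_abs_le y]
  · nlinarith [abs_nonneg y, neg_abs_le y, le_abs_self y]
  · positivity

lemma gfun_one_sub_two_mul {m : ℝ} (hm₀ : 0 ≤ m) (hm₁ : m ≤ 1) : gfun (1 - 2 * m) = m ^ 2 := by
  unfold gfun; split_ifs <;> nlinarith

lemma measurable_gfun : Measurable gfun :=
  Measurable.ite measurableSet_Iic measurable_neg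
    (Measurable.ite measurableSet_Iic (by fun_prop) measurable_const)

/-- `c g(d/c)` is the supremum of `c m (1 - m) - m d` over `m ∈ [0, 1]`. -/
lemma mul_sub_le_mul_gfun_div {c m : ℝ} (hc : 0 < c) (hm₀ : 0 ≤ m) (hm₁ : m ≤ 1) (d : ℝ) :
    c * (m * (1 - m)) - m * d ≤ c * gfun (d / c) := by
  have key : m * (1 - m) - m * (d / c) ≤ gfun (d / c) := by
    unfold gfun; split_ifs
    · nlinarith [mul_nonneg (sub_nonneg.mpr hm₁) (by linarith : 0 ≤ -m - d / c)]
    · nlinarith [sq_nonneg (1 - d / c - 2 * m)]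
    · nlinarith [mul_nonneg hm₀ (by linarith : 0 ≤ m + d / c - 1)]
  calc c * (m * (1 - m)) - m * d = c * (m * (1 - m) - m * (d / c)) := by field_simp
    _ ≤ c * gfun (d / c) := mul_le_mul_of_nonneg_left key hc.le

lemma abs_mul_gfun_div_le (c d : ℝ) : |c * gfun (d / c)| ≤ |d| + |c| := by
  rcases eq_or_ne c 0 with rfl | hc
  · simp
  calc |c * gfun (d / c)| = |c| * gfun (d / c) := by rw [abs_mul, abs_of_nonneg (gfun_nonneg _)]
    _ ≤ |c| * (|d / c| + 1) := mul_le_mul_of_nonneg_left (gfun_le_abs_add_one _) (abs_nonneg c)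
    _ = |d| + |c| := by rw [abs_div]; field_simp

def lagrangian (c w : ℝ → ℝ) (s : ℝ) : ℝ := c (w s) * gfun (deriv w s / c (w s))

lemma ContDiffOn.exists_abs_deriv_le {w : ℝ → ℝ} {a b : ℝ} (hw : ContDiffOn ℝ 1 w (Icc a b))
    (hab : a < b) : ∃ M, ∀ s ∈ Ioo a b, |deriv w s| ≤ M := by
  obtain ⟨M, hM⟩ := isCompact_Icc.exists_bound_of_continuousOn
    (hw.continuousOn_derivWithin (uniqueDiffOn_Icc hab) le_rfl)
  refine ⟨M, fun s hs => ?_⟩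
  rw [← derivWithin_of_mem_nhds (Icc_mem_nhds hs.1 hs.2)]
  exact hM s (Ioo_subset_Icc_self hs)

lemma ContDiffOn.hasDerivAt_of_mem_Ioo {w : ℝ → ℝ} {a b s : ℝ}
    (hw : ContDiffOn ℝ 1 w (Icc a b)) (hs : s ∈ Ioo a b) : HasDerivAt w (deriv w s) s :=
  ((hw.differentiableOn one_ne_zero s (Ioo_subset_Icc_self hs)).differentiableAt
    (Icc_mem_nhds hs.1 hs.2)).hasDerivAt

lemma integrableOn_lagrangian {c w : ℝ → ℝ} {C a b : ℝ} (hc : Measurable c)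
    (hC : ∀ u, |c u| ≤ C) (hab : a < b) (hw : ContDiffOn ℝ 1 w (Icc a b)) :
    IntegrableOn (lagrangian c w) (Icc a b) := by
  obtain ⟨M, hM⟩ := hw.exists_abs_deriv_le hab
  rw [integrableOn_Icc_iff_integrableOn_Ioo]
  have hF : Measurable fun p : ℝ × ℝ => c p.1 * gfun (p.2 / c p.1) :=
    (hc.comp measurable_fst).mul
      (measurable_gfun.comp (measurable_snd.div (hc.comp measurable_fst)))
  have hwd : AEMeasurable (fun s => (w s, deriv w s)) (volume.restrict (Ioo a b)) :=
    ((hw.continuousOn.mono Ioo_subset_Icc_self).aemeasurable measurableSet_Ioo).prodMk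
      (measurable_deriv w).aemeasurable
  refine IntegrableOn.of_bound measure_Ioo_lt_top (hF.comp_aemeasurable hwd).aestronglyMeasurable
    (M + C) ((ae_restrict_mem measurableSet_Ioo).mono fun s hs => ?_)
  rw [Real.norm_eq_abs, lagrangian]
  linarith [abs_mul_gfun_div_le (c (w s)) (deriv w s), hM s hs, hC (w s)]

lemma integral_lagrangian_of_affine {c w : ℝ → ℝ} {a b κ m : ℝ} (hab : a ≤ b) (hκ : 0 < κ)
    (hm₀ : 0 ≤ m) (hm₁ : m ≤ 1)
    (hw : ∀ s ∈ Ioo a b, HasDerivAt w (κ * (1 - 2 * m)) s ∧ c (w s) = κ) :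
    IntervalIntegrable (lagrangian c w) volume a b ∧
      ∫ s in a..b, lagrangian c w s = (b - a) * (κ * m ^ 2) := by
  have heq : EqOn (lagrangian c w) (fun _ => κ * m ^ 2) (Ioo a b) := fun s hs => by
    rw [lagrangian, (hw s hs).1.deriv, (hw s hs).2, mul_div_cancel_left₀ _ hκ.ne',
      gfun_one_sub_two_mul hm₀ hm₁]
  refine ⟨(intervalIntegrable_iff_integrableOn_Ioo_of_le hab).mpr
    ((integrableOn_const measure_Ioo_lt_top.ne).congr_fun heq.symm measurableSet_Ioo), ?_⟩
  calc ∫ s in a..b, lagrangian c w s = ∫ _ in a..b, κ * m ^ 2 := by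
        rw [intervalIntegral.integral_of_le hab, intervalIntegral.integral_of_le hab,
          integral_Ioc_eq_integral_Ioo, integral_Ioc_eq_integral_Ioo]
        exact setIntegral_congr_fun measurableSet_Ioo heq
    _ = (b - a) * (κ * m ^ 2) := by simp only [intervalIntegral.integral_const, smul_eq_mul]

lemma LipschitzWith.hasDerivWithinAt_Ioi_comp {Λ w : ℝ → ℝ} {K : ℝ≥0} (hΛ : LipschitzWith K Λ)
    {s d D : ℝ} (hw : HasDerivAt w d s)
    (hD : ∀ᶠ h in 𝓝[>] (0 : ℝ), Λ (w s + h * d) = Λ (w s) + h * D) :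
    HasDerivWithinAt (fun u => Λ (w u)) D (Ioi s) s := by
  rw [hasDerivWithinAt_iff_isLittleO]
  have hlin : (fun u => Λ (w u) - Λ (w s + (u - s) * d)) =o[𝓝[>] s] fun u => u - s := by
    refine (Asymptotics.isBigO_of_le' (c := K) _ fun u => ?_).trans_isLittleO
      hw.hasDerivWithinAt.isLittleO
    have := hΛ.dist_le_mul (w u) (w s + (u - s) * d)
    rw [Real.dist_eq, Real.dist_eq] at this
    rw [Real.norm_eq_abs, Real.norm_eq_abs, smul_eq_mul]
    convert this using 3; ring
  have hshift : Tendsto (fun u => u - s) (𝓝[>] s) (𝓝[>] 0) :=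
    tendsto_nhdsWithin_of_tendsto_nhds_of_eventually_within _
      (((continuous_sub_right s).tendsto' s 0 (sub_self s)).mono_left nhdsWithin_le_nhds)
      (eventually_mem_nhdsWithin.mono fun u hu => mem_Ioi.mpr (sub_pos.mpr hu))
  have hzero : (fun u => Λ (w s + (u - s) * d) - Λ (w s) - (u - s) * D) =o[𝓝[>] s]
      fun u => u - s :=
    (Asymptotics.isLittleO_zero _ _).congr'
      ((hshift.eventually hD).mono fun u hu => by simp only [hu]; ring) EventuallyEq.rfl
  refine (hlin.add hzero).congr' (Eventually.of_forall fun u => ?_) EventuallyEq.rfl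
  simp only [smul_eq_mul]; ring

lemma sub_le_integral_of_partition {f G : ℝ → ℝ} :
    ∀ (k : ℕ) (s : Fin (k + 1) → ℝ),
      (∀ i : Fin k, IntervalIntegrable f volume (s i.castSucc) (s i.succ) ∧
        G (s i.succ) - G (s i.castSucc) ≤ ∫ u in s i.castSucc..s i.succ, f u) →
      IntervalIntegrable f volume (s 0) (s (Fin.last k)) ∧
        G (s (Fin.last k)) - G (s 0) ≤ ∫ u in s 0..s (Fin.last k), f u
  | 0, s, _ => by simp
  | k + 1, s, h => by
    obtain ⟨hint, hle⟩ := sub_le_integral_of_partition k (fun i => s i.castSucc)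
      fun i => by simpa only [Fin.succ_castSucc] using h i.castSucc
    obtain ⟨hint', hle'⟩ := h (Fin.last k)
    simp only [Fin.castSucc_zero, Fin.succ_last] at hint hle hint' hle' ⊢
    refine ⟨hint.trans hint', ?_⟩
    rw [← intervalIntegral.integral_add_adjacent_intervals hint hint']
    linarith

lemma vFun_eq_of_isGreatest {c v₀ : ℝ → ℝ} {x t E : ℝ} (ht : 0 < t)
    (h : IsGreatest {A | ∃ w, IsVPath t x w ∧
      A = v₀ (w 0) - ∫ s in (0 : ℝ)..t, lagrangian c w s} E) :
    vFun c v₀ x t = E := by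
  rw [vFun, if_neg ht.not_ge]
  exact h.csSup_eq

section TwoPhase

variable {c₁ c₂ ρ r : ℝ}

lemma twoPhase_of_neg {u : ℝ} (hu : u < 0) : twoPhase c₁ c₂ u = c₁ := if_pos hu

lemma twoPhase_of_nonneg {u : ℝ} (hu : 0 ≤ u) : twoPhase c₁ c₂ u = c₂ := if_neg hu.not_gt

lemma measurable_twoPhase : Measurable (twoPhase c₁ c₂) :=
  Measurable.ite measurableSet_Iio measurable_const measurable_const

lemma abs_twoPhase_le (u : ℝ) : |twoPhase c₁ c₂ u| ≤ |c₁| + |c₂| := by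
  unfold twoPhase; split_ifs <;> linarith [abs_nonneg c₁, abs_nonneg c₂]

def kink (ρ r u : ℝ) : ℝ := max (ρ * u) (r * u)

lemma kink_of_nonpos (hρr : ρ ≤ r) {u : ℝ} (hu : u ≤ 0) : kink ρ r u = ρ * u :=
  max_eq_left (by nlinarith)

lemma kink_of_nonneg (hρr : ρ ≤ r) {u : ℝ} (hu : 0 ≤ u) : kink ρ r u = r * u :=
  max_eq_right (by nlinarith)

lemma mul_le_kink (u : ℝ) : ρ * u ≤ kink ρ r u := le_max_left _ _

lemma lipschitzWith_kink : LipschitzWith (max ‖ρ‖₊ ‖r‖₊) (kink ρ r) :=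
  (lipschitzWith_smul ρ).max (lipschitzWith_smul r)

lemma exists_rightDeriv_kink_le (hc₁ : 0 < c₁) (hc₂ : 0 < c₂) (hρ : 0 ≤ ρ) (hρr : ρ ≤ r)
    (hr : r ≤ 1) (hK : c₂ * (r * (1 - r)) ≤ c₁ * (ρ * (1 - ρ))) (u d : ℝ) :
    ∃ D, (∀ᶠ h in 𝓝[>] (0 : ℝ), kink ρ r (u + h * d) = kink ρ r u + h * D) ∧
      c₂ * (r * (1 - r)) - D ≤ twoPhase c₁ c₂ u * gfun (d / twoPhase c₁ c₂ u) := by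
  have hlim : Tendsto (fun h : ℝ => u + h * d) (𝓝[>] 0) (𝓝 u) :=
    ((by fun_prop : Continuous fun h : ℝ => u + h * d).tendsto' 0 u (by simp)).mono_left
      nhdsWithin_le_nhds
  have hpos : ∀ᶠ h in 𝓝[>] (0 : ℝ), 0 < h := eventually_mem_nhdsWithin
  have hright := mul_sub_le_mul_gfun_div hc₂ (hρ.trans hρr) hr d
  rcases lt_or_ge u 0 with hu | hu
  · refine ⟨ρ * d, ?_, ?_⟩
    · filter_upwards [hlim.eventually_lt_const hu] with h hh
      rw [kink_of_nonpos hρr hh.le, kink_of_nonpos hρr hu.le]; ring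
    · rw [twoPhase_of_neg hu]
      linarith [mul_sub_le_mul_gfun_div hc₁ hρ (by linarith) d]
  rw [twoPhase_of_nonneg hu]
  by_cases hleft : u = 0 ∧ d < 0
  · -- the path enters the left phase from the interface, where the speed is still `c₂`
    obtain ⟨rfl, hd⟩ := hleft
    refine ⟨ρ * d, ?_, by nlinarith⟩
    filter_upwards [hpos] with h hh
    rw [kink_of_nonpos hρr (by nlinarith), kink_of_nonpos hρr le_rfl]; ring
  · refine ⟨r * d, ?_, by linarith⟩
    have hnonneg : ∀ᶠ h in 𝓝[>] (0 : ℝ), 0 ≤ u + h * d := by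
      rcases hu.lt_or_eq with hu | rfl
      · exact (hlim.eventually_const_lt hu).mono fun h hh => hh.le
      · filter_upwards [hpos] with h hh
        nlinarith [not_lt.mp fun hd => hleft ⟨rfl, hd⟩]
    filter_upwards [hnonneg] with h hh
    rw [kink_of_nonneg hρr hh, kink_of_nonneg hρr hu]; ring

lemma sub_le_integral_lagrangian_twoPhase (hc₁ : 0 < c₁) (hc₂ : 0 < c₂) (hρ : 0 ≤ ρ)
    (hρr : ρ ≤ r) (hr : r ≤ 1) (hK : c₂ * (r * (1 - r)) ≤ c₁ * (ρ * (1 - ρ)))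
    {w : ℝ → ℝ} {a b : ℝ} (hab : a < b) (hw : ContDiffOn ℝ 1 w (Icc a b)) :
    (c₂ * (r * (1 - r)) * b - kink ρ r (w b)) - (c₂ * (r * (1 - r)) * a - kink ρ r (w a)) ≤
      ∫ s in a..b, lagrangian (twoPhase c₁ c₂) w s := by
  choose D hD hDle using exists_rightDeriv_kink_le hc₁ hc₂ hρ hρr hr hK
  refine intervalIntegral.sub_le_integral_of_hasDeriv_right_of_le
    (g := fun s => c₂ * (r * (1 - r)) * s - kink ρ r (w s))
    (g' := fun s => c₂ * (r * (1 - r)) - D (w s) (deriv w s)) hab.le ?_ (fun s hs => ?_)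
    (integrableOn_lagrangian measurable_twoPhase abs_twoPhase_le hab hw) fun s _ => hDle _ _
  · exact (continuousOn_const.mul continuousOn_id).sub
      (lipschitzWith_kink.continuous.comp_continuousOn hw.continuousOn)
  · simpa using ((hasDerivAt_id s).const_mul (c₂ * (r * (1 - r)))).hasDerivWithinAt.fun_sub
      (lipschitzWith_kink.hasDerivWithinAt_Ioi_comp (hw.hasDerivAt_of_mem_Ioo hs) (hD _ _))

lemma mul_sub_integral_lagrangian_le (hc₁ : 0 < c₁) (hc₂ : 0 < c₂) (hρ : 0 ≤ ρ) (hρr : ρ ≤ r)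
    (hr : r ≤ 1) (hK : c₂ * (r * (1 - r)) ≤ c₁ * (ρ * (1 - ρ))) {t x : ℝ} {w : ℝ → ℝ}
    (hw : IsVPath t x w) :
    ρ * w 0 - ∫ s in (0 : ℝ)..t, lagrangian (twoPhase c₁ c₂) w s ≤
      kink ρ r x - c₂ * (r * (1 - r)) * t := by
  obtain ⟨-, rfl, k, s, hs, hs₀, hsk, hpiece⟩ := hw
  have hlt (i : Fin k) : s i.castSucc < s i.succ := hs i.castSucc_lt_succ
  have htotal := (sub_le_integral_of_partition (f := lagrangian (twoPhase c₁ c₂) w)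
    (G := fun u => c₂ * (r * (1 - r)) * u - kink ρ r (w u)) k s fun i =>
    ⟨(intervalIntegrable_iff_integrableOn_Icc_of_le (hlt i).le).mpr
      (integrableOn_lagrangian measurable_twoPhase abs_twoPhase_le (hlt i) (hpiece i)),
    sub_le_integral_lagrangian_twoPhase hc₁ hc₂ hρ hρr hr hK (hlt i) (hpiece i)⟩).2
  rw [hs₀, hsk] at htotal
  linarith [mul_le_kink (ρ := ρ) (r := r) (w 0)]

lemma vFun_twoPhase_eq_kink {t x : ℝ} (hc₁ : 0 < c₁) (hc₂ : 0 < c₂) (hρ : 0 ≤ ρ)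
    (hρr : ρ ≤ r) (hr : r ≤ 1) (hK : c₂ * (r * (1 - r)) ≤ c₁ * (ρ * (1 - ρ))) (ht : 0 < t)
    {w : ℝ → ℝ} (hw : IsVPath t x w)
    (hval : ρ * w 0 - ∫ s in (0 : ℝ)..t, lagrangian (twoPhase c₁ c₂) w s =
      kink ρ r x - c₂ * (r * (1 - r)) * t) :
    vFun (twoPhase c₁ c₂) (fun u => ρ * u) x t = kink ρ r x - c₂ * (r * (1 - r)) * t :=
  vFun_eq_of_isGreatest ht ⟨⟨w, hw, hval.symm⟩, by
    rintro _ ⟨w', hw', rfl⟩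
    exact mul_sub_integral_lagrangian_le hc₁ hc₂ hρ hρr hr hK hw'⟩

end TwoPhase

lemma hasDerivAt_add_mul_sub (x b t s : ℝ) : HasDerivAt (fun u => x + b * (u - t)) b s := by
  simpa using (((hasDerivAt_id s).sub_const t).const_mul b).const_add x

lemma exists_affine_path (c : ℝ → ℝ) {t x κ m : ℝ} (ht : 0 < t) (hκ : 0 < κ) (hm₀ : 0 ≤ m)
    (hm₁ : m ≤ 1) (hphase : ∀ s ∈ Ioo 0 t, c (x + κ * (1 - 2 * m) * (s - t)) = κ) :
    ∃ w, IsVPath t x w ∧ w 0 = x - κ * (1 - 2 * m) * t ∧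
      ∫ s in (0 : ℝ)..t, lagrangian c w s = t * (κ * m ^ 2) := by
  refine ⟨fun s => x + κ * (1 - 2 * m) * (s - t), ⟨by fun_prop, by simp, 1, ![0, t], ?_, rfl, rfl,
    fun _ => by fun_prop⟩, by ring, ?_⟩
  · simpa [Fin.strictMono_iff_lt_succ] using ht
  · simpa using (integral_lagrangian_of_affine ht.le hκ hm₀ hm₁ fun s hs =>
      ⟨hasDerivAt_add_mul_sub _ _ _ _, hphase s hs⟩).2

lemma exists_broken_path (c : ℝ → ℝ) {t τ x κ₁ m₁ κ₂ m₂ : ℝ} (hτ : 0 < τ) (hτt : τ < t)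
    (hx : x = κ₂ * (1 - 2 * m₂) * (t - τ)) (hκ₁ : 0 < κ₁) (hκ₂ : 0 < κ₂)
    (hm₁₀ : 0 ≤ m₁) (hm₁₁ : m₁ ≤ 1) (hm₂₀ : 0 ≤ m₂) (hm₂₁ : m₂ ≤ 1)
    (hphase₁ : ∀ s ∈ Ioo 0 τ, c (κ₁ * (1 - 2 * m₁) * (s - τ)) = κ₁)
    (hphase₂ : ∀ s ∈ Ioo τ t, c (κ₂ * (1 - 2 * m₂) * (s - τ)) = κ₂) :
    ∃ w, IsVPath t x w ∧ w 0 = -(κ₁ * (1 - 2 * m₁) * τ) ∧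
      ∫ s in (0 : ℝ)..t, lagrangian c w s = τ * (κ₁ * m₁ ^ 2) + (t - τ) * (κ₂ * m₂ ^ 2) := by
  set b₁ := κ₁ * (1 - 2 * m₁)
  set b₂ := κ₂ * (1 - 2 * m₂)
  set w : ℝ → ℝ := fun s => b₁ * min (s - τ) 0 + b₂ * max (s - τ) 0
  have hleft : ∀ s ≤ τ, w s = 0 + b₁ * (s - τ) := fun s hs => by
    simp only [w, min_eq_left (sub_nonpos.mpr hs), max_eq_right (sub_nonpos.mpr hs)]; ring
  have hright : ∀ s ≥ τ, w s = 0 + b₂ * (s - τ) := fun s hs => by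
    simp only [w, min_eq_right (sub_nonneg.mpr hs), max_eq_left (sub_nonneg.mpr hs)]; ring
  have hpath : IsVPath t x w := by
    refine ⟨by fun_prop, by rw [hright t hτt.le, hx]; ring, 2, ![0, τ, t], ?_, rfl, rfl, ?_⟩
    · simp [Fin.strictMono_iff_lt_succ, Fin.forall_fin_succ, hτ, hτt]
    · intro i
      fin_cases i
      · exact (by fun_prop : ContDiff ℝ 1 fun s => 0 + b₁ * (s - τ)).contDiffOn.congr
          fun s hs => hleft s hs.2
      · exact (by fun_prop : ContDiff ℝ 1 fun s => 0 + b₂ * (s - τ)).contDiffOn.congr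
          fun s hs => hright s hs.1
  obtain ⟨hint₁, hval₁⟩ := integral_lagrangian_of_affine (c := c) (w := w) hτ.le hκ₁ hm₁₀ hm₁₁
    fun s hs => ⟨(hasDerivAt_add_mul_sub 0 b₁ τ s).congr_of_eventuallyEq
      (eventually_of_mem (Iio_mem_nhds hs.2) fun u hu => hleft u hu.le),
      by rw [hleft s hs.2.le, zero_add]; exact hphase₁ s hs⟩
  obtain ⟨hint₂, hval₂⟩ := integral_lagrangian_of_affine (c := c) (w := w) hτt.le hκ₂ hm₂₀ hm₂₁
    fun s hs => ⟨(hasDerivAt_add_mul_sub 0 b₂ τ s).congr_of_eventuallyEq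
      (eventually_of_mem (Ioi_mem_nhds hs.1) fun u hu => hright u hu.le),
      by rw [hright s hs.1.le, zero_add]; exact hphase₂ s hs⟩
  refine ⟨w, hpath, by rw [hleft 0 hτ.le]; ring, ?_⟩
  rw [← intervalIntegral.integral_add_adjacent_intervals hint₁ hint₂, hval₁, hval₂, sub_zero]

section Regions

variable {c₁ c₂ ρ rs t : ℝ}

lemma vFun_twoPhase_eqOn_Iio (h₂ : 0 < c₂) (h₁₂ : c₂ ≤ c₁) (hρ : 0 ≤ ρ) (hρrs : ρ ≤ rs)
    (hrs : rs < 1 / 2) (hkey : c₂ * (rs * (1 - rs)) = c₁ * (ρ * (1 - ρ))) (ht : 0 < t) :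
    EqOn (fun x => vFun (twoPhase c₁ c₂) (fun u => ρ * u) x t)
      (fun x => ρ * x - c₁ * (ρ * (1 - ρ)) * t) (Iio 0) := fun x hx => by
  dsimp only
  have hc₁ : 0 < c₁ := h₂.trans_le h₁₂
  have hb : 0 ≤ c₁ * (1 - 2 * ρ) := mul_nonneg hc₁.le (by linarith)
  obtain ⟨w, hw, hw₀, hint⟩ := exists_affine_path (twoPhase c₁ c₂) (x := x) ht hc₁ hρ
    (by linarith) fun s hs => twoPhase_of_neg
      (by nlinarith [mul_nonneg hb (sub_nonneg.mpr hs.2.le), mem_Iio.mp hx])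
  have := vFun_twoPhase_eq_kink hc₁ h₂ hρ hρrs (by linarith) hkey.le ht hw (by
    rw [hw₀, hint, kink_of_nonpos hρrs hx.le]; linear_combination t * hkey)
  rw [this, kink_of_nonpos hρrs hx.le, hkey]

lemma vFun_twoPhase_eqOn_Ioo_zero (h₂ : 0 < c₂) (h₁₂ : c₂ ≤ c₁) (hρ : 0 ≤ ρ) (hρrs : ρ ≤ rs)
    (hrs : rs < 1 / 2) (hkey : c₂ * (rs * (1 - rs)) = c₁ * (ρ * (1 - ρ))) (ht : 0 < t) :
    EqOn (fun x => vFun (twoPhase c₁ c₂) (fun u => ρ * u) x t)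
      (fun x => rs * x - c₂ * (rs * (1 - rs)) * t) (Ioo 0 (c₂ * (1 - 2 * rs) * t)) :=
    fun x ⟨hx₀, hx⟩ => by
  dsimp only
  have hc₁ : 0 < c₁ := h₂.trans_le h₁₂
  have hb₂ : 0 < c₂ * (1 - 2 * rs) := mul_pos h₂ (by linarith)
  set τ := t - x / (c₂ * (1 - 2 * rs)) with hτdef
  have hxτ : x = c₂ * (1 - 2 * rs) * (t - τ) := by rw [hτdef, sub_sub_cancel, mul_div_cancel₀ x hb₂.ne']
  have hτ : 0 < τ := by
    have : x / (c₂ * (1 - 2 * rs)) < t := by rw [div_lt_iff₀ hb₂]; linarith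
    linarith
  have hτt : τ < t := by have := div_pos hx₀ hb₂; linarith
  obtain ⟨w, hw, hw₀, hint⟩ := exists_broken_path (twoPhase c₁ c₂) hτ hτt hxτ hc₁ h₂ hρ
    (by linarith) (hρ.trans hρrs) (by linarith)
    (fun s hs => twoPhase_of_neg (mul_neg_of_pos_of_neg (mul_pos hc₁ (by linarith))
      (sub_neg.mpr hs.2))) fun s hs => twoPhase_of_nonneg
      (mul_nonneg hb₂.le (sub_nonneg.mpr hs.1.le))
  rw [show rs * x = kink ρ rs x from (kink_of_nonneg hρrs hx₀.le).symm]
  exact vFun_twoPhase_eq_kink hc₁ h₂ hρ hρrs (by linarith) hkey.le ht hw (by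
    rw [hw₀, hint, kink_of_nonneg hρrs hx₀.le]; linear_combination τ * hkey - rs * hxτ)

lemma vFun_twoPhase_eqOn_fan (h₂ : 0 < c₂) (h₁₂ : c₂ ≤ c₁) (hρ : 0 ≤ ρ) (hρrs : ρ ≤ rs)
    (hrs : rs < 1 / 2) (hkey : c₂ * (rs * (1 - rs)) = c₁ * (ρ * (1 - ρ))) (ht : 0 < t) :
    EqOn (fun x => vFun (twoPhase c₁ c₂) (fun u => ρ * u) x t)
      (fun x => -(c₂ * t * ((1 - x / (c₂ * t)) / 2) ^ 2))
      (Ioo (c₂ * (1 - 2 * rs) * t) (c₂ * (1 - 2 * ρ) * t)) := fun x ⟨hx₁, hx₂⟩ => by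
  dsimp only
  have hc₁ : 0 < c₁ := h₂.trans_le h₁₂
  have hct : 0 < c₂ * t := mul_pos h₂ ht
  set r := (1 - x / (c₂ * t)) / 2 with hrdef
  have hx : x = c₂ * t * (1 - 2 * r) := by rw [hrdef]; field_simp; ring
  have hρr : ρ ≤ r := by nlinarith
  have hrrs : r ≤ rs := by nlinarith
  have hx₀ : 0 < x := by nlinarith
  have hK : c₂ * (r * (1 - r)) ≤ c₁ * (ρ * (1 - ρ)) := by rw [← hkey]; nlinarith
  obtain ⟨w, hw, hw₀, hint⟩ := exists_affine_path (twoPhase c₁ c₂) (x := x) ht h₂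
    (hρ.trans hρr) (by linarith) fun s hs => twoPhase_of_nonneg (by
      rw [show x + c₂ * (1 - 2 * r) * (s - t) = c₂ * (1 - 2 * r) * s by rw [hx]; ring]
      exact mul_nonneg (mul_nonneg h₂.le (by linarith)) hs.1.le)
  have := vFun_twoPhase_eq_kink hc₁ h₂ hρ hρr (by linarith) hK ht hw (by
    rw [hw₀, hint, kink_of_nonneg hρr hx₀.le]; linear_combination (ρ - r) * hx)
  rw [this, kink_of_nonneg hρr hx₀.le]
  linear_combination r * hx

lemma vFun_twoPhase_eqOn_Ioi (h₂ : 0 < c₂) (h₁₂ : c₂ ≤ c₁) (hρ : 0 ≤ ρ) (hρ₂ : ρ < 1 / 2)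
    (ht : 0 < t) :
    EqOn (fun x => vFun (twoPhase c₁ c₂) (fun u => ρ * u) x t)
      (fun x => ρ * x - c₂ * (ρ * (1 - ρ)) * t) (Ioi (c₂ * (1 - 2 * ρ) * t)) := fun x hx => by
  dsimp only
  have hc₁ : 0 < c₁ := h₂.trans_le h₁₂
  have hb : 0 ≤ c₂ * (1 - 2 * ρ) := mul_nonneg h₂.le (by linarith)
  have hx₀ : 0 ≤ x := (mul_nonneg hb ht.le).trans hx.le
  obtain ⟨w, hw, hw₀, hint⟩ := exists_affine_path (twoPhase c₁ c₂) ht h₂ hρ (by linarith)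
    fun s hs => twoPhase_of_nonneg (by nlinarith [mul_nonneg hb hs.1.le, mem_Ioi.mp hx])
  rw [show ρ * x = kink ρ ρ x from (kink_of_nonneg le_rfl hx₀).symm]
  exact vFun_twoPhase_eq_kink hc₁ h₂ hρ le_rfl (by linarith)
    (mul_le_mul_of_nonneg_right h₁₂ (by nlinarith)) ht hw (by
      rw [hw₀, hint, kink_of_nonneg le_rfl hx₀]; ring)

end Regions

lemma hasDerivAt_fan {c₂ t : ℝ} (h₂ : 0 < c₂) (ht : 0 < t) (x : ℝ) :
    HasDerivAt (fun y => -(c₂ * t * ((1 - y / (c₂ * t)) / 2) ^ 2)) ((1 - x / (t * c₂)) / 2) x := by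
  have h : HasDerivAt (fun y => (1 - y / (c₂ * t)) / 2) (-(1 / (c₂ * t)) / 2) x := by
    simpa using (((hasDerivAt_id x).div_const (c₂ * t)).const_sub 1).div_const 2
  refine ((h.pow 2).const_mul (c₂ * t)).neg.congr_deriv ?_
  norm_num [mul_comm t c₂]
  field_simp

lemma hasDerivAt_mul_sub_const (a C x : ℝ) : HasDerivAt (fun y => a * y - C) a x := by
  simpa using ((hasDerivAt_id x).const_mul a).sub_const C

lemma interface_density_spec {c₁ c₂ ρ rs : ℝ} (h₁₂ : c₂ ≤ c₁) (h₂ : 0 < c₂) (hρ : 0 < ρ)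
    (hρu : ρ < 1 / 2 - √(1 - c₂ / c₁) / 2)
    (hrs : rs = 1 / 2 - √(1 - 4 * ρ * (1 - ρ) * c₁ / c₂) / 2) :
    ρ ≤ rs ∧ rs < 1 / 2 ∧ c₂ * (rs * (1 - rs)) = c₁ * (ρ * (1 - ρ)) := by
  have hc₁ : 0 < c₁ := h₂.trans_le h₁₂
  have hsq : √(1 - c₂ / c₁) ^ 2 = 1 - c₂ / c₁ :=
    Real.sq_sqrt (sub_nonneg.mpr ((div_le_one hc₁).mpr h₁₂))
  have hflux : 4 * ρ * (1 - ρ) * c₁ < c₂ := by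
    have : 4 * ρ * (1 - ρ) < c₂ / c₁ := by nlinarith [Real.sqrt_nonneg (1 - c₂ / c₁)]
    rwa [lt_div_iff₀ hc₁] at this
  have hpos : 0 < 1 - 4 * ρ * (1 - ρ) * c₁ / c₂ := by rw [sub_pos, div_lt_one h₂]; exact hflux
  have hsq' := Real.sq_sqrt hpos.le
  have hkey : c₂ * (rs * (1 - rs)) = c₁ * (ρ * (1 - ρ)) := by
    have : rs * (1 - rs) = (1 - √(1 - 4 * ρ * (1 - ρ) * c₁ / c₂) ^ 2) / 4 := by rw [hrs]; ring
    rw [this, hsq']; field_simp; ring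
  have hrs₂ : rs < 1 / 2 := by rw [hrs]; linarith [Real.sqrt_pos.mpr hpos]
  have hρ₂ : ρ < 1 / 2 := by linarith [Real.sqrt_nonneg (1 - c₂ / c₁)]
  refine ⟨le_of_not_gt fun hlt => ?_, hrs₂, hkey⟩
  nlinarith [mul_le_mul_of_nonneg_right h₁₂ (by nlinarith : 0 ≤ ρ * (1 - ρ)),
    mul_pos h₂ (mul_pos (sub_pos.mpr hlt) (by linarith : 0 < 1 - ρ - rs))]

/-- Theorem: two-phase density profile from constant initial density `ρ ∈ (0, ρ*)`. -/
theorem stmt13 (c₁ c₂ ρ rs : ℝ) (h₁₂ : c₂ ≤ c₁) (h₂ : 0 < c₂)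
    (hρl : 0 < ρ) (hρu : ρ < 1 / 2 - Real.sqrt (1 - c₂ / c₁) / 2)
    (hrs : rs = 1 / 2 - Real.sqrt (1 - 4 * ρ * (1 - ρ) * c₁ / c₂) / 2) :
    ∀ t : ℝ, 0 < t → ∀ x : ℝ,
      x ≠ 0 → x ≠ c₂ * (1 - 2 * rs) * t → x ≠ c₂ * (1 - 2 * ρ) * t →
      HasDerivAt (fun x' => vFun (twoPhase c₁ c₂) (fun u => ρ * u) x' t)
        (if x < 0 then ρ
         else if x < c₂ * (1 - 2 * rs) * t then rs
         else if x < c₂ * (1 - 2 * ρ) * t then (1 - x / (t * c₂)) / 2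
         else ρ) x := by
  intro t ht x hx₀ hx₁ hx₂
  obtain ⟨hρrs, hrs₂, hkey⟩ := interface_density_spec h₁₂ h₂ hρl hρu hrs
  rcases hx₀.lt_or_gt with hx₀ | hx₀
  · rw [if_pos hx₀]
    exact (hasDerivAt_mul_sub_const _ _ x).congr_of_eventuallyEq (eventuallyEq_of_mem
      (Iio_mem_nhds hx₀) (vFun_twoPhase_eqOn_Iio h₂ h₁₂ hρl.le hρrs hrs₂ hkey ht))
  rw [if_neg hx₀.not_gt]
  rcases hx₁.lt_or_gt with hx₁ | hx₁
  · rw [if_pos hx₁]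
    exact (hasDerivAt_mul_sub_const _ _ x).congr_of_eventuallyEq (eventuallyEq_of_mem
      (Ioo_mem_nhds hx₀ hx₁) (vFun_twoPhase_eqOn_Ioo_zero h₂ h₁₂ hρl.le hρrs hrs₂ hkey ht))
  rw [if_neg hx₁.not_gt]
  rcases hx₂.lt_or_gt with hx₂ | hx₂
  · rw [if_pos hx₂]
    exact (hasDerivAt_fan h₂ ht x).congr_of_eventuallyEq (eventuallyEq_of_mem
      (Ioo_mem_nhds hx₁ hx₂) (vFun_twoPhase_eqOn_fan h₂ h₁₂ hρl.le hρrs hrs₂ hkey ht))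
  · rw [if_neg hx₂.not_gt]
    exact (hasDerivAt_mul_sub_const _ _ x).congr_of_eventuallyEq (eventuallyEq_of_mem
      (Ioi_mem_nhds hx₂) (vFun_twoPhase_eqOn_Ioi h₂ h₁₂ hρl.le (hρrs.trans_lt hrs₂) ht))

end
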